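/- The double *-adjoint of initial pawn annihilation is deletion of the first pawn: for all words x and y, ⟨a_{p,0}* x | y⟩ = ⟨x | a_{p,1} y⟩. Explicitly: if y contains at least one `true` entry then ⟨true :: x | y⟩ = ⟨x | y′⟩, where y′ is y with its leftmost `true` entry deleted; and if y contains no `true` entry then ⟨true :: x | y⟩ = 0. -/

import Mathlib

/-- A single pawn move: a pawn (`true`) advances one square rightward into an
empty square (`false`). -/
def PawnMove (w₀ w₁ : List Bool) : Prop :=
  ∃ u v : List Bool, w₀ = u ++ [true, false] ++ v ∧ w₁ = u ++ [false, true] ++ v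

/-- Reachability: the reflexive-transitive closure of the single-move relation. -/
def Reach : List Bool → List Bool → Prop :=
  Relation.ReflTransGen PawnMove

/-- The `ZMod 2` pairing `⟨w₀|w₁⟩`: `1` if `w₁` is reachable from `w₀`, else `0`. -/
noncomputable def pairing (w₀ w₁ : List Bool) : ZMod 2 :=
  open Classical in if Reach w₀ w₁ then 1 else 0

/-!
Deleting the leftmost pawn turns every pawn move into a pawn move or into the
identity, so `true :: x` can only reach words `y` that contain a pawn and
satisfy `Reach x (y.erase true)`. Conversely, if `y = s ++ true :: t` with `s` free of
pawns, play the moves `x ⟶ s ++ t` behind a new leading pawn and then walk that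
pawn across the empty squares `s`.
-/

theorem Reach.append_left (c : List Bool) {a b : List Bool} (h : Reach a b) :
    Reach (c ++ a) (c ++ b) :=
  Relation.ReflTransGen.lift (c ++ ·)
    (fun _ _ ⟨u, v, ha, hb⟩ ↦ ⟨c ++ u, v, by simp [ha], by simp [hb]⟩) _ _ h

theorem PawnMove.true_mem_right {w w' : List Bool} (h : PawnMove w w') : true ∈ w' := by
  obtain ⟨u, v, -, rfl⟩ := h
  simp

theorem PawnMove.reach_erase_true {w w' : List Bool} (h : PawnMove w w') :
    Reach (w.erase true) (w'.erase true) := by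
  obtain ⟨u, v, rfl, rfl⟩ := h
  by_cases hu : true ∈ u
  · exact .single ⟨u.erase true, v, by simp [List.erase_append_left _ hu],
      by simp [List.erase_append_left _ hu]⟩
  · -- the moved pawn is the first one: erasing it leaves `u ++ false :: v` either way
    simp only [List.append_assoc, List.cons_append, List.nil_append, List.erase_append_right _ hu,
      List.erase_cons_head, List.erase_cons_tail, beq_true, Bool.false_eq_true, not_false_eq_true]
    exact .refl

theorem Reach.erase_true {w w' : List Bool} (h : Reach w w') :
    Reach (w.erase true) (w'.erase true) :=
  Relation.ReflTransGen.lift' (List.erase · true) (fun _ _ ↦ PawnMove.reach_erase_true) _ _ h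

theorem reach_cons_true_append {s : List Bool} (hs : true ∉ s) (t : List Bool) :
    Reach (true :: (s ++ t)) (s ++ true :: t) := by
  induction s with
  | nil => exact .refl
  | cons b s ih =>
    obtain ⟨rfl, hs'⟩ : b = false ∧ true ∉ s := by simpa [eq_comm] using hs
    exact .head ⟨[], s ++ t, rfl, rfl⟩ (Reach.append_left [false] (ih hs'))

theorem reach_cons_true_iff {x y : List Bool} :
    Reach (true :: x) y ↔ true ∈ y ∧ Reach x (y.erase true) := by
  constructor
  · intro h
    refine ⟨?_, by simpa using h.erase_true⟩
    rcases h.cases_tail with rfl | ⟨_, -, hmove⟩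
    · exact List.mem_cons_self
    · exact hmove.true_mem_right
  · rintro ⟨hy, hx⟩
    obtain ⟨s, t, rfl, hs⟩ := List.eq_append_cons_of_mem hy
    rw [List.erase_append_right _ hs, List.erase_cons_head] at hx
    exact (Reach.append_left [true] hx).trans (reach_cons_true_append hs t)

theorem initial_pawn_creation_adjoint :
    (∀ x y : List Bool, true ∈ y →
      pairing (true :: x) y = pairing x (y.erase true)) ∧
    (∀ x y : List Bool, true ∉ y → pairing (true :: x) y = 0) := by
  classical
  constructor
  · intro x y hy
    exact if_congr (reach_cons_true_iff.trans (and_iff_right hy)) rfl rfl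
  · intro x y hy
    exact if_neg fun h ↦ hy (reach_cons_true_iff.mp h).1
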